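/- arXiv:1310.5904 — 4 statements merged into one kernel-verified Lean document; each statement's English description precedes it below -/
import Mathlib

section
/- Let χ : ℝ^{2d} → ℝ^{2d} be a bijection with χ and χ^{-1} Lipschitz. For every δ ∈ (0,1) there exists δ* ∈ (0,δ), depending only on χ and δ, such that for every Γ ⊂ ℝ^{2d}: χ(Γ_{δ*}) ⊂ χ(Γ)_δ. -/
open Real

/-- Japanese bracket. -/
noncomputable def jb {n : ℕ} (z : EuclideanSpace ℝ (Fin n)) : ℝ :=
  Real.sqrt (1 + ‖z‖ ^ 2)

/-- The `δ`-neighborhood of a set `Γ ⊆ ℝ^n`. -/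
def nbhd {n : ℕ} (Γ : Set (EuclideanSpace ℝ (Fin n))) (δ : ℝ) :
    Set (EuclideanSpace ℝ (Fin n)) :=
  {z | ∃ z₀ ∈ Γ, ‖z - z₀‖ < δ * jb z₀}

lemma jb_le {n : ℕ} (z : EuclideanSpace ℝ (Fin n)) : jb z ≤ 1 + ‖z‖ := by
  have h : (1 + ‖z‖ ^ 2) ≤ (1 + ‖z‖) ^ 2 := by nlinarith [norm_nonneg z]
  calc jb z ≤ Real.sqrt ((1 + ‖z‖) ^ 2) := Real.sqrt_le_sqrt h
    _ = 1 + ‖z‖ := Real.sqrt_sq (by positivity)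

lemma one_le_jb {n : ℕ} (z : EuclideanSpace ℝ (Fin n)) : 1 ≤ jb z := by
  have h := Real.sqrt_le_sqrt (show (1:ℝ) ≤ 1 + ‖z‖ ^ 2 by nlinarith [sq_nonneg ‖z‖])
  rwa [Real.sqrt_one] at h

lemma norm_le_jb {n : ℕ} (z : EuclideanSpace ℝ (Fin n)) : ‖z‖ ≤ jb z := by
  have h := Real.sqrt_le_sqrt (show ‖z‖ ^ 2 ≤ 1 + ‖z‖ ^ 2 by linarith)
  rwa [Real.sqrt_sq (norm_nonneg z)] at h

theorem image_of_nbhd_subset (d : ℕ)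
    (χ ψ : EuclideanSpace ℝ (Fin (2 * d)) → EuclideanSpace ℝ (Fin (2 * d)))
    (K K' : NNReal) (hχ : LipschitzWith K χ) (hψ : LipschitzWith K' ψ)
    (hl : Function.LeftInverse ψ χ) (hr : Function.RightInverse ψ χ) :
    ∀ δ : ℝ, 0 < δ → δ < 1 → ∃ δs : ℝ, 0 < δs ∧ δs < δ ∧
      ∀ Γ : Set (EuclideanSpace ℝ (Fin (2 * d))),
        χ '' nbhd Γ δs ⊆ nbhd (χ '' Γ) δ := by
  intro δ hδ hδ1
  set C : ℝ := 1 + ‖ψ 0‖ + (K' : ℝ) with hCdef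
  have hK0 : (0:ℝ) ≤ (K : ℝ) := K.coe_nonneg
  have hK'0 : (0:ℝ) ≤ (K' : ℝ) := K'.coe_nonneg
  have hC1 : (1:ℝ) ≤ C := by
    have := norm_nonneg (ψ 0); simp only [hCdef]; linarith
  have hCpos : (0:ℝ) < C := by linarith
  refine ⟨min (δ/2) (δ/(2*((K:ℝ)+1)*C)), ?_, ?_, ?_⟩
  · apply lt_min (by linarith)
    positivity
  · calc min (δ/2) (δ/(2*((K:ℝ)+1)*C)) ≤ δ/2 := min_le_left _ _
      _ < δ := by linarith
  · intro Γ w hw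
    obtain ⟨z, hz, rfl⟩ := hw
    obtain ⟨z₀, hz₀, hlt⟩ := hz
    refine ⟨χ z₀, ⟨z₀, hz₀, rfl⟩, ?_⟩
    set δs : ℝ := min (δ/2) (δ/(2*((K:ℝ)+1)*C)) with hδsdef
    have hδspos : (0:ℝ) < δs := lt_min (by linarith) (by positivity)
    have hδs2 : δs ≤ δ/(2*((K:ℝ)+1)*C) := min_le_right _ _
    have hδs2' : δs * (2*((K:ℝ)+1)*C) ≤ δ := by
      rw [← le_div_iff₀ (by positivity)]; exact hδs2
    -- key geometric facts
    set a : ℝ := jb z₀ with ha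
    set b : ℝ := jb (χ z₀) with hb
    have hb1 : (1:ℝ) ≤ b := one_le_jb _
    have ha0 : (0:ℝ) < a := lt_of_lt_of_le one_pos (one_le_jb _)
    have hnz₀ : ‖z₀‖ ≤ (K' : ℝ) * ‖χ z₀‖ + ‖ψ 0‖ := by
      have h1 : dist (ψ (χ z₀)) (ψ 0) ≤ (K' : ℝ) * dist (χ z₀) 0 :=
        hψ.dist_le_mul _ _
      rw [dist_eq_norm, dist_eq_norm, sub_zero] at h1
      calc ‖z₀‖ = ‖(ψ (χ z₀) - ψ 0) + ψ 0‖ := by rw [sub_add_cancel, hl z₀]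
        _ ≤ ‖ψ (χ z₀) - ψ 0‖ + ‖ψ 0‖ := norm_add_le _ _
        _ ≤ (K' : ℝ) * ‖χ z₀‖ + ‖ψ 0‖ := by linarith
    have haCb : a ≤ C * b := by
      have h1 : a ≤ 1 + ‖z₀‖ := jb_le z₀
      have h2 : ‖χ z₀‖ ≤ b := norm_le_jb _
      have h3 : (0:ℝ) ≤ ‖χ z₀‖ := norm_nonneg _
      have h4 : (0:ℝ) ≤ ‖ψ 0‖ := norm_nonneg _
      simp only [hCdef]
      nlinarith
    have hlip : ‖χ z - χ z₀‖ ≤ (K : ℝ) * ‖z - z₀‖ := by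
      have := hχ.dist_le_mul z z₀
      rwa [dist_eq_norm, dist_eq_norm] at this
    have hmain : (K : ℝ) * ‖z - z₀‖ < δ * b := by
      have h5 : (K : ℝ) * ‖z - z₀‖ ≤ (K : ℝ) * (δs * a) := by
        apply mul_le_mul_of_nonneg_left hlt.le hK0
      have h6 : (K : ℝ) * (δs * a) ≤ (K : ℝ) * δs * (C * b) := by
        have := mul_le_mul_of_nonneg_left haCb
          (show (0:ℝ) ≤ (K : ℝ) * δs by positivity)
        linarith [this]
      have h7 : δs * (2*((K:ℝ)+1)*C) * b ≤ δ * b :=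
        mul_le_mul_of_nonneg_right hδs2' (by linarith)
      have hδb : (0:ℝ) < δ * b := by positivity
      nlinarith [mul_nonneg (mul_nonneg (le_of_lt hδspos) hCpos.le) (show (0:ℝ) ≤ b by linarith)]
    exact lt_of_le_of_lt hlip hmain
end

section
/- Let χ : ℝ^{2d} → ℝ^{2d} be a bijection with χ and χ^{-1} Lipschitz. For every δ ∈ (0,1) there exists δ* ∈ (0,δ), depending only on χ and δ, such that for every Γ ⊂ ℝ^{2d}: χ(Γ)_{δ*} ⊂ χ(Γ_δ). -/
open Real

theorem nbhd_of_image_subset (d : ℕ)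
    (χ ψ : EuclideanSpace ℝ (Fin (2 * d)) → EuclideanSpace ℝ (Fin (2 * d)))
    (K K' : NNReal) (hχ : LipschitzWith K χ) (hψ : LipschitzWith K' ψ)
    (hl : Function.LeftInverse ψ χ) (hr : Function.RightInverse ψ χ) :
    ∀ δ : ℝ, 0 < δ → δ < 1 → ∃ δs : ℝ, 0 < δs ∧ δs < δ ∧
      ∀ Γ : Set (EuclideanSpace ℝ (Fin (2 * d))),
        nbhd (χ '' Γ) δs ⊆ χ '' nbhd Γ δ := by
  intro δ hδ hδ1
  set C : ℝ := ‖χ 0‖ with hC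
  set M : ℝ := 1 + 2 * C ^ 2 + 2 * (K : ℝ) ^ 2 with hM
  have hC0 : 0 ≤ C := norm_nonneg _
  have hM0 : 0 ≤ M := by positivity
  set D : ℝ := (K' : ℝ) * Real.sqrt M with hD
  have hD0 : 0 ≤ D := by positivity
  refine ⟨δ / (D + 2), by positivity, ?_, ?_⟩
  · rw [div_lt_iff₀ (by linarith)]
    nlinarith
  · intro Γ w hw
    obtain ⟨y, ⟨z₀, hz₀, rfl⟩, hwy⟩ := hw
    refine ⟨ψ w, ⟨z₀, hz₀, ?_⟩, hr w⟩
    have hjb : 1 ≤ jb z₀ := one_le_jb z₀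
    -- ‖χ z₀‖ ≤ K ‖z₀‖ + C
    have h1 : ‖χ z₀‖ ≤ (K : ℝ) * ‖z₀‖ + C := by
      have := hχ.dist_le_mul z₀ 0
      rw [dist_eq_norm, dist_eq_norm, sub_zero] at this
      calc ‖χ z₀‖ = ‖(χ z₀ - χ 0) + χ 0‖ := by rw [sub_add_cancel]
        _ ≤ ‖χ z₀ - χ 0‖ + ‖χ 0‖ := norm_add_le _ _
        _ ≤ (K : ℝ) * ‖z₀‖ + C := by rw [hC]; linarith
    -- jb (χ z₀) ≤ √M * jb z₀
    have h2 : jb (χ z₀) ≤ Real.sqrt M * jb z₀ := by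
      unfold jb
      rw [← Real.sqrt_mul hM0]
      apply Real.sqrt_le_sqrt
      nlinarith [sq_nonneg ‖z₀‖, norm_nonneg ‖z₀‖, norm_nonneg (χ z₀),
        sq_nonneg ((K : ℝ) * ‖z₀‖ - C), norm_nonneg z₀,
        sq_nonneg ((K:ℝ) * ‖z₀‖ + C), NNReal.coe_nonneg K]
    -- main chain
    have h3 : ‖ψ w - z₀‖ ≤ (K' : ℝ) * ‖w - χ z₀‖ := by
      have := hψ.dist_le_mul w (χ z₀)
      rw [dist_eq_norm, dist_eq_norm, hl z₀] at this
      exact this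
    have h4 : (K' : ℝ) * ‖w - χ z₀‖ ≤ (K' : ℝ) * (δ / (D + 2) * jb (χ z₀)) := by
      apply mul_le_mul_of_nonneg_left (le_of_lt hwy) (NNReal.coe_nonneg K')
    have h5 : (K' : ℝ) * (δ / (D + 2) * jb (χ z₀)) ≤ D * (δ / (D + 2)) * jb z₀ := by
      rw [hD]
      have hδs : 0 ≤ δ / (D + 2) := by positivity
      calc (K' : ℝ) * (δ / (D + 2) * jb (χ z₀))
          ≤ (K' : ℝ) * (δ / (D + 2) * (Real.sqrt M * jb z₀)) := by
            apply mul_le_mul_of_nonneg_left _ (NNReal.coe_nonneg K')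
            exact mul_le_mul_of_nonneg_left h2 hδs
        _ = (K' : ℝ) * Real.sqrt M * (δ / (D + 2)) * jb z₀ := by ring
    have h6 : D * (δ / (D + 2)) * jb z₀ < δ * jb z₀ := by
      have : D * (δ / (D + 2)) < δ := by
        rw [mul_div_assoc', div_lt_iff₀ (by linarith)]
        nlinarith
      nlinarith
    linarith
end

section
/- Let χ : ℝ^{2d} → ℝ^{2d} be a measure-preserving bi-Lipschitz bijection, let K : ℝ^{2d} × ℝ^{2d} → ℂ satisfy |K(w,z)| ≤ C exp(−ε|w − χ(z)|) for some C, ε > 0, and let v be a weight on ℝ^{2d} with m v-moderate (m(z+ζ) ≤ C₀ v(z) m(ζ)) and ∫ v(z) e^{−ε|z|} dz < ∞. Then the integral operator M[G](w) = ∫ K(w,z) G(z) dz is bounded from L^p_{m∘χ}(ℝ^{2d}) to L^p_m(ℝ^{2d}) for every 1 ≤ p ≤ ∞. -/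
/-!
Moderateness of `m` turns the kernel bound into `m w * ‖K w z‖ ≤ g (w - χ z) * m (χ z)` with
`g u = C₀ v(u) C e^{-ε‖u‖}` integrable, so `M` is dominated by the positive operator with kernel
`g (w - χ z)` acting on `|m ∘ χ · G|`. That kernel has all its `dz`-integrals equal to `‖g‖₁`
because `χ` is measure preserving, and all its `dw`-integrals equal to `‖g‖₁` by translation
invariance, so the Schur test bounds it on every `Lᵖ` by `‖g‖₁`.
-/

open Real MeasureTheory
open scoped ENNReal

theorem ENNReal.rpow_lintegral_mul_le_of_one_le {α : Type*} [MeasurableSpace α] {μ : Measure α}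
    {k H : α → ℝ≥0∞} (hk : AEMeasurable k μ) (hH : AEMeasurable H μ) {r : ℝ} (hr : 1 ≤ r) :
    (∫⁻ a, k a * H a ∂μ) ^ r ≤ (∫⁻ a, k a ∂μ) ^ (r - 1) * ∫⁻ a, k a * H a ^ r ∂μ := by
  have hr₀ : 0 < r := by linarith
  have hexp : 0 ≤ 1 - r⁻¹ := sub_nonneg.2 (inv_le_one_of_one_le₀ hr)
  have hsplit : ∀ a, k a * H a = k a ^ (1 - r⁻¹) * (k a * H a ^ r) ^ r⁻¹ := fun a => by
    rw [ENNReal.mul_rpow_of_nonneg _ _ (by positivity), ← ENNReal.rpow_mul,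
      mul_inv_cancel₀ hr₀.ne', ENNReal.rpow_one, ← mul_assoc,
      ← ENNReal.rpow_add_of_nonneg _ _ hexp (by positivity),
      sub_add_cancel, ENNReal.rpow_one]
  have holder := ENNReal.lintegral_mul_norm_pow_le hk (hk.mul (hH.pow_const r))
    hexp (inv_nonneg.2 hr₀.le) (sub_add_cancel 1 r⁻¹)
  calc (∫⁻ a, k a * H a ∂μ) ^ r
      ≤ ((∫⁻ a, k a ∂μ) ^ (1 - r⁻¹) * (∫⁻ a, k a * H a ^ r ∂μ) ^ r⁻¹) ^ r := by
        simp_rw [hsplit]; gcongr; exact holder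
    _ = (∫⁻ a, k a ∂μ) ^ (r - 1) * ∫⁻ a, k a * H a ^ r ∂μ := by
        rw [ENNReal.mul_rpow_of_nonneg _ _ hr₀.le, ← ENNReal.rpow_mul, ← ENNReal.rpow_mul,
          inv_mul_cancel₀ hr₀.ne', ENNReal.rpow_one, sub_mul, one_mul, inv_mul_cancel₀ hr₀.ne']

section SchurTest

variable {α β : Type*} [MeasurableSpace α] [MeasurableSpace β] {μ : Measure α} {ν : Measure β}
  {k : α → β → ℝ≥0∞} {H : β → ℝ≥0∞} {A : ℝ≥0∞}

theorem lintegral_rpow_lintegral_kernel_mul_le [SFinite μ] [SFinite ν]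
    (hk : Measurable (Function.uncurry k)) (hH : AEMeasurable H ν)
    (hrow : ∀ w, ∫⁻ z, k w z ∂ν ≤ A) (hcol : ∀ z, ∫⁻ w, k w z ∂μ ≤ A) {r : ℝ} (hr : 1 ≤ r) :
    ∫⁻ w, (∫⁻ z, k w z * H z ∂ν) ^ r ∂μ ≤ A ^ r * ∫⁻ z, H z ^ r ∂ν := by
  have hprod : AEMeasurable (Function.uncurry fun w z => k w z * H z ^ r) (μ.prod ν) :=
    hk.aemeasurable.mul (hH.pow_const r).comp_snd
  have hinner : AEMeasurable (fun w => ∫⁻ z, k w z * H z ^ r ∂ν) μ :=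
    hprod.lintegral_prod_right'
  calc ∫⁻ w, (∫⁻ z, k w z * H z ∂ν) ^ r ∂μ
      ≤ ∫⁻ w, A ^ (r - 1) * ∫⁻ z, k w z * H z ^ r ∂ν ∂μ := by
        refine lintegral_mono fun w => ?_
        refine (ENNReal.rpow_lintegral_mul_le_of_one_le
          (hk.of_uncurry_left).aemeasurable hH hr).trans ?_
        gcongr
        exact hrow w
    _ = A ^ (r - 1) * ∫⁻ z, (∫⁻ w, k w z ∂μ) * H z ^ r ∂ν := by
        rw [lintegral_const_mul'' _ hinner, lintegral_lintegral_swap hprod]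
        congr 1
        exact lintegral_congr fun z => lintegral_mul_const'' _ hk.of_uncurry_right.aemeasurable
    _ ≤ A ^ (r - 1) * ∫⁻ z, A * H z ^ r ∂ν := by
        gcongr with z
        exact hcol z
    _ = A ^ r * ∫⁻ z, H z ^ r ∂ν := by
        rw [lintegral_const_mul'' _ (hH.pow_const r), ← mul_assoc]
        congr 1
        calc A ^ (r - 1) * A = A ^ (r - 1) * A ^ (1 : ℝ) := by rw [ENNReal.rpow_one]
          _ = A ^ r := by
            rw [← ENNReal.rpow_add_of_nonneg _ _ (by linarith) zero_le_one, sub_add_cancel]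

theorem eLpNormEssSup_lintegral_kernel_mul_le (hk : ∀ w, AEMeasurable (k w) ν)
    (hrow : ∀ w, ∫⁻ z, k w z ∂ν ≤ A) :
    eLpNormEssSup (fun w => ∫⁻ z, k w z * H z ∂ν) μ ≤ A * eLpNormEssSup H ν := by
  refine eLpNormEssSup_le_of_ae_enorm_bound (Filter.Eventually.of_forall fun w => ?_)
  calc ‖∫⁻ z, k w z * H z ∂ν‖ₑ
      ≤ ∫⁻ z, k w z * eLpNormEssSup H ν ∂ν := by
        rw [enorm_eq_self]
        exact lintegral_mono_ae (ae_le_eLpNormEssSup.mono fun z hz => by gcongr; exact hz)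
    _ ≤ A * eLpNormEssSup H ν := by
        rw [lintegral_mul_const'' _ (hk w)]
        gcongr
        exact hrow w

theorem eLpNorm_lintegral_kernel_mul_le [SFinite μ] [SFinite ν]
    (hk : Measurable (Function.uncurry k)) (hH : AEMeasurable H ν)
    (hrow : ∀ w, ∫⁻ z, k w z ∂ν ≤ A) (hcol : ∀ z, ∫⁻ w, k w z ∂μ ≤ A) {p : ℝ≥0∞} (hp : 1 ≤ p) :
    eLpNorm (fun w => ∫⁻ z, k w z * H z ∂ν) p μ ≤ A * eLpNorm H p ν := by
  rcases eq_or_ne p ⊤ with rfl | hp_top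
  · simpa only [eLpNorm_exponent_top] using
      eLpNormEssSup_lintegral_kernel_mul_le (μ := μ) (H := H)
        (fun w => hk.of_uncurry_left.aemeasurable) hrow
  have hp₀ : p ≠ 0 := (zero_lt_one.trans_le hp).ne'
  have hr : 1 ≤ p.toReal := by
    simpa using ENNReal.toReal_mono hp_top hp
  simp only [eLpNorm_eq_lintegral_rpow_enorm_toReal hp₀ hp_top, enorm_eq_self]
  calc (∫⁻ w, (∫⁻ z, k w z * H z ∂ν) ^ p.toReal ∂μ) ^ (1 / p.toReal)
      ≤ (A ^ p.toReal * ∫⁻ z, H z ^ p.toReal ∂ν) ^ (1 / p.toReal) := by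
        gcongr
        exact lintegral_rpow_lintegral_kernel_mul_le hk hH hrow hcol hr
    _ = A * (∫⁻ z, H z ^ p.toReal ∂ν) ^ (1 / p.toReal) := by
        rw [ENNReal.mul_rpow_of_nonneg _ _ (by positivity), ← ENNReal.rpow_mul,
          mul_one_div_cancel (by linarith), ENNReal.rpow_one]

end SchurTest

theorem eLpNorm_lintegral_comp_sub_mul_le {G β : Type*} [AddCommGroup G] [MeasurableSpace G]
    [MeasurableAdd₂ G] [MeasurableNeg G] {μ : Measure G} [μ.IsAddLeftInvariant] [μ.IsNegInvariant]
    [SFinite μ] [MeasurableSpace β] {ν : Measure β} [SFinite ν] {χ : β → G}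
    (hχ : MeasurePreserving χ ν μ) {g : G → ℝ≥0∞} (hg : Measurable g) {H : β → ℝ≥0∞}
    (hH : AEMeasurable H ν) {p : ℝ≥0∞} (hp : 1 ≤ p) :
    eLpNorm (fun w => ∫⁻ z, g (w - χ z) * H z ∂ν) p μ ≤ (∫⁻ u, g u ∂μ) * eLpNorm H p ν := by
  refine eLpNorm_lintegral_kernel_mul_le (k := fun w z => g (w - χ z))
    (hg.comp (measurable_fst.sub (hχ.measurable.comp measurable_snd))) hH (fun w => ?_)
    (fun z => ?_) hp
  · rw [hχ.lintegral_comp (f := fun u => g (w - u)) (hg.comp (measurable_const.sub measurable_id)),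
      (Measure.measurePreserving_sub_left μ w).lintegral_comp hg]
  · rw [(measurePreserving_sub_right μ (χ z)).lintegral_comp hg]

theorem enorm_weight_mul_kernel_mul_le {E : Type*} [AddCommGroup E] {m v : E → ℝ} {C₀ : ℝ}
    (hm : ∀ z, 0 < m z) (hmod : ∀ z ζ, m (z + ζ) ≤ C₀ * v z * m ζ) {w y : E} {k : ℂ} {κ : ℝ}
    (hk : ‖k‖ ≤ κ) (c : ℂ) :
    ‖(m w : ℂ)‖ₑ * ‖k * c‖ₑ ≤ ENNReal.ofReal (C₀ * v (w - y) * κ) * ‖(m y : ℂ) * c‖ₑ := by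
  have hmw : m w ≤ C₀ * v (w - y) * m y := by simpa using hmod (w - y) y
  have hreal : m w * ‖k‖ ≤ C₀ * v (w - y) * κ * m y := by
    calc m w * ‖k‖ ≤ C₀ * v (w - y) * m y * κ :=
          mul_le_mul hmw hk (norm_nonneg k) ((hm w).le.trans hmw)
      _ = C₀ * v (w - y) * κ * m y := by ring
  rw [enorm_mul, enorm_mul, ← ofReal_norm (m w : ℂ), ← ofReal_norm (m y : ℂ), ← ofReal_norm k,
    Complex.norm_real, Complex.norm_real, Real.norm_of_nonneg (hm w).le,
    Real.norm_of_nonneg (hm y).le, ← mul_assoc, ← mul_assoc, ← ENNReal.ofReal_mul (hm w).le,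
    ← ENNReal.ofReal_mul' (hm y).le]
  gcongr

theorem enorm_weight_mul_integral_le {E : Type*} [NormedAddCommGroup E] [MeasurableSpace E]
    {μ : Measure E} {m v κ : E → ℝ} {C₀ : ℝ} (hm : ∀ z, 0 < m z)
    (hmod : ∀ z ζ, m (z + ζ) ≤ C₀ * v z * m ζ) {χ : E → E} {Kf : E → E → ℂ}
    (hK : ∀ w z, ‖Kf w z‖ ≤ κ (w - χ z)) (G : E → ℂ) (w : E) :
    ‖(m w : ℂ) * ∫ z, Kf w z * G z ∂μ‖ₑ ≤
      ∫⁻ z, ENNReal.ofReal (C₀ * v (w - χ z) * κ (w - χ z)) * ‖(m (χ z) : ℂ) * G z‖ₑ ∂μ :=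
  calc ‖(m w : ℂ) * ∫ z, Kf w z * G z ∂μ‖ₑ
      ≤ ‖(m w : ℂ)‖ₑ * ∫⁻ z, ‖Kf w z * G z‖ₑ ∂μ := by
        rw [enorm_mul]
        gcongr
        exact enorm_integral_le_lintegral_enorm _
    _ = ∫⁻ z, ‖(m w : ℂ)‖ₑ * ‖Kf w z * G z‖ₑ ∂μ := (lintegral_const_mul' _ _ enorm_ne_top).symm
    _ ≤ _ := lintegral_mono fun z => enorm_weight_mul_kernel_mul_le hm hmod (hK w z) (G z)

theorem sparse_kernel_weighted_Lp_bounded_general (d : ℕ)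
    (χ : EuclideanSpace ℝ (Fin (2 * d)) → EuclideanSpace ℝ (Fin (2 * d)))
    (hmp : MeasurePreserving χ volume volume)
    (Kf : EuclideanSpace ℝ (Fin (2 * d)) → EuclideanSpace ℝ (Fin (2 * d)) → ℂ)
    (C ε : ℝ)
    (hK : ∀ w z, ‖Kf w z‖ ≤ C * Real.exp (-ε * ‖w - χ z‖))
    (m v : EuclideanSpace ℝ (Fin (2 * d)) → ℝ)
    (hm : ∀ z, 0 < m z)
    (hmmeas : Measurable m) (hvmeas : Measurable v)
    (C₀ : ℝ)
    (hmod : ∀ z ζ, m (z + ζ) ≤ C₀ * v z * m ζ)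
    (hvint : Integrable (fun z => v z * Real.exp (-ε * ‖z‖)))
    (p : ENNReal) (hp : 1 ≤ p) :
    ∃ Cb : ENNReal, Cb ≠ ⊤ ∧
      ∀ G : EuclideanSpace ℝ (Fin (2 * d)) → ℂ, AEStronglyMeasurable G volume →
        eLpNorm (fun w => (m w : ℂ) * ∫ z, Kf w z * G z) p volume ≤
          Cb * eLpNorm (fun z => (m (χ z) : ℂ) * G z) p volume := by
  set g := fun u => ENNReal.ofReal (C₀ * v u * (C * Real.exp (-ε * ‖u‖)))
  have hg : Measurable g := by fun_prop
  have hg_int : ∫⁻ u, g u ≠ ⊤ := by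
    refine (Integrable.lintegral_lt_top ?_).ne
    convert hvint.const_mul (C₀ * C) using 2
    ring
  refine ⟨∫⁻ u, g u, hg_int, fun G hG => ?_⟩
  have hH : AEMeasurable (fun z => ‖(m (χ z) : ℂ) * G z‖ₑ) volume :=
    ((Complex.measurable_ofReal.comp (hmmeas.comp hmp.measurable)).aestronglyMeasurable.mul
      hG).enorm
  calc eLpNorm (fun w => (m w : ℂ) * ∫ z, Kf w z * G z) p volume
      ≤ eLpNorm (fun w => ∫⁻ z, g (w - χ z) * ‖(m (χ z) : ℂ) * G z‖ₑ) p volume :=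
        eLpNorm_mono_enorm fun w => by
          rw [enorm_eq_self]
          exact enorm_weight_mul_integral_le (κ := fun u => C * Real.exp (-ε * ‖u‖)) hm hmod hK G w
    _ ≤ (∫⁻ u, g u) * eLpNorm (fun z => ‖(m (χ z) : ℂ) * G z‖ₑ) p volume :=
        eLpNorm_lintegral_comp_sub_mul_le hmp hg hH hp
    _ = (∫⁻ u, g u) * eLpNorm (fun z => (m (χ z) : ℂ) * G z) p volume := by
        rw [eLpNorm_enorm]

theorem sparse_kernel_weighted_Lp_bounded (d : ℕ)
    (χ ψ : EuclideanSpace ℝ (Fin (2 * d)) → EuclideanSpace ℝ (Fin (2 * d)))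
    (hmp : MeasurePreserving χ volume volume)
    (K K' : NNReal) (hχ : LipschitzWith K χ) (hψ : LipschitzWith K' ψ)
    (hl : Function.LeftInverse ψ χ) (hr : Function.RightInverse ψ χ)
    (Kf : EuclideanSpace ℝ (Fin (2 * d)) → EuclideanSpace ℝ (Fin (2 * d)) → ℂ)
    (hKm : Measurable (Function.uncurry Kf))
    (C ε : ℝ) (hC : 0 < C) (hε : 0 < ε)
    (hK : ∀ w z, ‖Kf w z‖ ≤ C * Real.exp (-ε * ‖w - χ z‖))
    (m v : EuclideanSpace ℝ (Fin (2 * d)) → ℝ)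
    (hm : ∀ z, 0 < m z) (hv : ∀ z, 0 < v z)
    (hmmeas : Measurable m) (hvmeas : Measurable v)
    (C₀ : ℝ) (hC₀ : 0 < C₀)
    (hmod : ∀ z ζ, m (z + ζ) ≤ C₀ * v z * m ζ)
    (hvint : Integrable (fun z => v z * Real.exp (-ε * ‖z‖)))
    (p : ENNReal) (hp : 1 ≤ p) :
    ∃ Cb : ENNReal, Cb ≠ ⊤ ∧
      ∀ G : EuclideanSpace ℝ (Fin (2 * d)) → ℂ, AEStronglyMeasurable G volume →
        eLpNorm (fun w => (m w : ℂ) * ∫ z, Kf w z * G z) p volume ≤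
          Cb * eLpNorm (fun z => (m (χ z) : ℂ) * G z) p volume :=
  sparse_kernel_weighted_Lp_bounded_general d χ hmp Kf C ε hK m v hm hmmeas hvmeas C₀ hmod hvint p
    hp
end

section
/- Let F : ℝ^{2d} → ℂ satisfy |F(u)| ≤ ∫_{ℝ^{2d}} exp(−ε|u − χ(z)|) exp(−h|z|) dz for all u, where χ : ℝ^{2d} → ℝ^{2d} is bi-Lipschitz and ε, h > 0. Then there exist C, ε''' > 0 such that |F(u)| ≤ C exp(−ε'''|u|) for all u ∈ ℝ^{2d}. -/
/-!
The Lipschitz bound `‖χ z‖ ≤ ‖χ 0‖ + K ‖z‖` and the triangle inequality give,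
for `δ ≤ ε` with `δ K ≤ h / 2`,
`δ ‖u‖ ≤ ε ‖u - χ z‖ + δ ‖χ 0‖ + (h / 2) ‖z‖`,
so the integrand is at most `exp (δ ‖χ 0‖) exp (-δ ‖u‖) exp (-(h / 2) ‖z‖)`, and the last factor
is integrable: it is dominated by `(1 + ‖z‖) ^ (-(dim + 1))`.
-/

open Real MeasureTheory Module
open scoped Nat

theorem exp_neg_mul_le_mul_one_add_rpow_neg {b t : ℝ} (hb : 0 < b) (ht : 0 ≤ t) (n : ℕ) :
    exp (-b * t) ≤ n ! * exp b / b ^ n * (1 + t) ^ (-(n : ℝ)) := by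
  have hbt : 0 < b * (1 + t) := by positivity
  calc exp (-b * t) = exp b / exp (b * (1 + t)) := by rw [← exp_sub]; ring_nf
    _ ≤ exp b / ((b * (1 + t)) ^ n / n !) :=
        div_le_div_of_nonneg_left (exp_pos b).le (by positivity)
          (pow_div_factorial_le_exp _ hbt.le n)
    _ = n ! * exp b / b ^ n * (1 + t) ^ (-(n : ℝ)) := by
        rw [rpow_neg (by positivity), rpow_natCast, mul_pow]
        field_simp

theorem integrable_exp_neg_mul_norm {E : Type*} [NormedAddCommGroup E] [NormedSpace ℝ E]
    [FiniteDimensional ℝ E] [MeasurableSpace E] [BorelSpace E] (μ : Measure E)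
    [μ.IsAddHaarMeasure] {b : ℝ} (hb : 0 < b) :
    Integrable (fun x : E ↦ exp (-b * ‖x‖)) μ := by
  set n := finrank ℝ E + 1
  have hdecay := integrable_one_add_norm (μ := μ) (r := n) (by simp [n])
  refine (hdecay.const_mul (n ! * exp b / b ^ n)).mono' (by fun_prop) (ae_of_all _ fun x ↦ ?_)
  rw [norm_of_nonneg (exp_pos _).le]
  exact exp_neg_mul_le_mul_one_add_rpow_neg hb (norm_nonneg x) n

section Lipschitz

variable {E F : Type*} [SeminormedAddCommGroup E] [SeminormedAddCommGroup F] {K : NNReal}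

theorem LipschitzWith.norm_le_norm_zero_add_mul {f : E → F} (hf : LipschitzWith K f) (x : E) :
    ‖f x‖ ≤ ‖f 0‖ + K * ‖x‖ := by
  have := hf.dist_le_mul x 0
  rw [dist_eq_norm, dist_eq_norm, sub_zero] at this
  linarith [norm_le_norm_add_norm_sub' (f x) (f 0)]

theorem exp_mul_exp_le_of_lipschitzWith {χ : E → F} (hχ : LipschitzWith K χ)
    {ε h δ h' : ℝ} (hδ : 0 ≤ δ) (hδε : δ ≤ ε) (hδh : δ * K + h' ≤ h) (u : F) (z : E) :
    exp (-ε * ‖u - χ z‖) * exp (-h * ‖z‖) ≤ exp (δ * ‖χ 0‖ - δ * ‖u‖) * exp (-h' * ‖z‖) := by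
  rw [← exp_add, ← exp_add, exp_le_exp]
  have hu : ‖u‖ ≤ ‖u - χ z‖ + (‖χ 0‖ + K * ‖z‖) := by
    linarith [norm_le_norm_add_norm_sub' u (χ z), hχ.norm_le_norm_zero_add_mul z]
  have h₁ := mul_le_mul_of_nonneg_left hu hδ
  have h₂ := mul_le_mul_of_nonneg_right hδε (norm_nonneg (u - χ z))
  have h₃ := mul_le_mul_of_nonneg_right (le_sub_iff_add_le.mpr hδh) (norm_nonneg z)
  linarith

end Lipschitz

theorem exp_decay_of_integral_bound_general (d : ℕ)
    (χ : EuclideanSpace ℝ (Fin (2 * d)) → EuclideanSpace ℝ (Fin (2 * d)))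
    (K : NNReal) (hχ : LipschitzWith K χ)
    (F : EuclideanSpace ℝ (Fin (2 * d)) → ℂ)
    (ε h : ℝ) (hε : 0 < ε) (hh : 0 < h)
    (hF : ∀ u, ‖F u‖ ≤
      ∫ z : EuclideanSpace ℝ (Fin (2 * d)),
        Real.exp (-ε * ‖u - χ z‖) * Real.exp (-h * ‖z‖)) :
    ∃ C > 0, ∃ ε''' > 0, ∀ u,
      ‖F u‖ ≤ C * Real.exp (-ε''' * ‖u‖) := by
  set δ := min ε (h / (2 * (K + 1)))
  have hδ : 0 < δ := lt_min hε (by positivity)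
  have hδh : δ * K + h / 2 ≤ h := by
    have : δ * (K + 1) ≤ h / 2 := by
      rw [← le_div_iff₀ (by positivity), div_div]
      exact min_le_right _ _
    linarith
  have hint := integrable_exp_neg_mul_norm volume
    (E := EuclideanSpace ℝ (Fin (2 * d))) (half_pos hh)
  refine ⟨exp (δ * ‖χ 0‖) * ∫ z, exp (-(h / 2) * ‖z‖),
    mul_pos (exp_pos _) (integral_exp_pos hint), δ, hδ, fun u ↦ ?_⟩
  calc ‖F u‖ ≤ _ := hF u
    _ ≤ ∫ z, exp (δ * ‖χ 0‖ - δ * ‖u‖) * exp (-(h / 2) * ‖z‖) :=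
        integral_mono_of_nonneg (ae_of_all _ fun z ↦ by positivity) (hint.const_mul _)
          (ae_of_all _ (exp_mul_exp_le_of_lipschitzWith hχ hδ.le (min_le_left _ _) hδh u))
    _ = _ := by rw [integral_const_mul, sub_eq_add_neg, exp_add, ← neg_mul]; ring

theorem exp_decay_of_integral_bound (d : ℕ)
    (χ ψ : EuclideanSpace ℝ (Fin (2 * d)) → EuclideanSpace ℝ (Fin (2 * d)))
    (K K' : NNReal) (hχ : LipschitzWith K χ) (hψ : LipschitzWith K' ψ)
    (hl : Function.LeftInverse ψ χ) (hr : Function.RightInverse ψ χ)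
    (F : EuclideanSpace ℝ (Fin (2 * d)) → ℂ)
    (ε h : ℝ) (hε : 0 < ε) (hh : 0 < h)
    (hF : ∀ u, ‖F u‖ ≤
      ∫ z : EuclideanSpace ℝ (Fin (2 * d)),
        Real.exp (-ε * ‖u - χ z‖) * Real.exp (-h * ‖z‖)) :
    ∃ C > 0, ∃ ε''' > 0, ∀ u,
      ‖F u‖ ≤ C * Real.exp (-ε''' * ‖u‖) :=
  exp_decay_of_integral_bound_general d χ K hχ F ε h hε hh hF
end
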